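/- arXiv:2310.00176 — 2 statements merged into one kernel-verified Lean document; each statement's English description precedes it below -/
import Mathlib

section
/- For every vector v ∈ ℝ^p and every ε > 0, the restricted dual norm ‖v‖_{2,ε} := max{⟨θ, v⟩ : ‖θ‖₂ ≤ 1, ‖θ‖_∞ ≤ ε} satisfies ‖v‖_{2,ε} ≥ ‖v‖₂ · ( ‖v‖₁/(√p · ‖v‖₂) − 1/(√p · ε) )₊², where x₊ denotes max(x,0) (and the bound is interpreted as 0 when v = 0). -/
/-!
The scaled sign vector `θ = c · sign v` is admissible whenever `c ≤ ε` and `p c² ≤ 1`, and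
`⟨θ, v⟩ = c ‖v‖₁`. The bound is vacuous unless `b := 1/(√p ε) < a := ‖v‖₁/(√p ‖v‖₂)`; as `a ≤ 1`
by Cauchy–Schwarz, this forces `1/√p ≤ ε`, so `c = 1/√p` is allowed, and
`‖v‖₂ (a - b)₊² ≤ ‖v‖₂ a = ‖v‖₁/√p`.
-/

open Finset

section RestrictedDual

variable {ι : Type*} [Fintype ι]

def restrictedDualSet (ε : ℝ) (v : ι → ℝ) : Set ℝ :=
  {x | ∃ θ : ι → ℝ, √(∑ i, θ i ^ 2) ≤ 1 ∧ (∀ i, |θ i| ≤ ε) ∧ x = ∑ i, θ i * v i}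

theorem bddAbove_restrictedDualSet (ε : ℝ) (v : ι → ℝ) : BddAbove (restrictedDualSet ε v) := by
  refine ⟨√(∑ i, v i ^ 2), ?_⟩
  rintro _ ⟨θ, hθ, -, rfl⟩
  calc ∑ i, θ i * v i ≤ √(∑ i, θ i ^ 2) * √(∑ i, v i ^ 2) := Real.sum_mul_le_sqrt_mul_sqrt _ _ _
    _ ≤ √(∑ i, v i ^ 2) := mul_le_of_le_one_left (Real.sqrt_nonneg _) hθ

theorem mul_sum_abs_mem_restrictedDualSet {ε c : ℝ} (v : ι → ℝ) (hc : 0 ≤ c) (hcε : c ≤ ε)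
    (hcard : Fintype.card ι * c ^ 2 ≤ 1) :
    c * ∑ i, |v i| ∈ restrictedDualSet ε v := by
  have hsign : ∀ i, |(SignType.sign (v i) : ℝ)| ≤ 1 := fun i => by
    cases SignType.sign (v i) <;> simp
  refine ⟨fun i => c * SignType.sign (v i), ?_, fun i => ?_, ?_⟩
  · refine Real.sqrt_le_one.mpr ?_
    calc ∑ i, (c * SignType.sign (v i)) ^ 2 ≤ ∑ _i : ι, c ^ 2 :=
          sum_le_sum fun i _ => by
            rw [mul_pow]
            exact mul_le_of_le_one_right (sq_nonneg c) ((sq_le_one_iff_abs_le_one _).mpr (hsign i))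
      _ ≤ 1 := by simpa using hcard
  · rw [abs_mul, abs_of_nonneg hc]
    exact (mul_le_of_le_one_right hc (hsign i)).trans hcε
  · rw [mul_sum]
    exact sum_congr rfl fun i _ => by rw [mul_assoc, sign_mul_self]

theorem mul_sum_abs_le_sSup_restrictedDualSet {ε c : ℝ} (v : ι → ℝ) (hc : 0 ≤ c) (hcε : c ≤ ε)
    (hcard : Fintype.card ι * c ^ 2 ≤ 1) :
    c * ∑ i, |v i| ≤ sSup (restrictedDualSet ε v) :=
  le_csSup (bddAbove_restrictedDualSet ε v) (mul_sum_abs_mem_restrictedDualSet v hc hcε hcard)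

end RestrictedDual

theorem sum_abs_le_sqrt_card_mul_sqrt_sum_sq {ι : Type*} [Fintype ι] (v : ι → ℝ) :
    ∑ i, |v i| ≤ √(Fintype.card ι) * √(∑ i, v i ^ 2) := by
  have h := Real.sum_mul_le_sqrt_mul_sqrt univ (fun _ => (1 : ℝ)) (fun i => |v i|)
  simpa only [one_mul, one_pow, sq_abs, sum_const, card_univ, nsmul_eq_mul, mul_one] using h

theorem max_sub_zero_sq_le {a b : ℝ} (ha₀ : 0 ≤ a) (ha₁ : a ≤ 1) (hb : 0 ≤ b) :
    max (a - b) 0 ^ 2 ≤ a := by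
  have h₀ : 0 ≤ max (a - b) 0 := le_max_right _ _
  have h₁ : max (a - b) 0 ≤ a := max_le (by linarith) ha₀
  nlinarith

/-- Restricted dual norm lower bound:
`‖v‖_{2,ε} ≥ ‖v‖₂ · (‖v‖₁/(√p ‖v‖₂) − 1/(√p ε))₊²`. -/
theorem stmt_0 (p : ℕ) (hp : 1 ≤ p) (v : Fin p → ℝ) (ε : ℝ) (hε : 0 < ε) :
    Real.sqrt (∑ i, (v i) ^ 2) *
      (max ((∑ i, |v i|) / (Real.sqrt p * Real.sqrt (∑ i, (v i) ^ 2)) -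
        1 / (Real.sqrt p * ε)) 0) ^ 2 ≤
    sSup {x : ℝ | ∃ θ : Fin p → ℝ, Real.sqrt (∑ i, (θ i) ^ 2) ≤ 1 ∧
      (∀ i, |θ i| ≤ ε) ∧ x = ∑ i, θ i * v i} := by
  change _ ≤ sSup (restrictedDualSet ε v)
  set N := √(∑ i, v i ^ 2)
  set S := ∑ i, |v i|
  have hsqrt_p : 0 < √(p : ℝ) := Real.sqrt_pos.mpr (by exact_mod_cast hp)
  have hS : 0 ≤ S := sum_nonneg fun i _ => abs_nonneg (v i)
  rcases le_or_gt (S / (√p * N)) (1 / (√p * ε)) with hsmall | hlarge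
  · rw [max_eq_right (sub_nonpos.mpr hsmall), zero_pow two_ne_zero, mul_zero]
    simpa using mul_sum_abs_le_sSup_restrictedDualSet (ε := ε) v le_rfl hε.le (by simp)
  · have ha₁ : S / (√p * N) ≤ 1 := by
      refine div_le_one_of_le₀ ?_ (by positivity)
      simpa using sum_abs_le_sqrt_card_mul_sqrt_sum_sq v
    have hN : N ≠ 0 := by
      rintro hN
      rw [hN, mul_zero, div_zero] at hlarge
      exact (one_div_pos.mpr (mul_pos hsqrt_p hε)).not_gt hlarge
    have hinv_le : 1 / √p ≤ ε := by
      rw [div_le_iff₀ hsqrt_p, mul_comm]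
      exact ((div_lt_one (by positivity)).mp (hlarge.trans_le ha₁)).le
    calc N * max (S / (√p * N) - 1 / (√p * ε)) 0 ^ 2 ≤ N * (S / (√p * N)) :=
          mul_le_mul_of_nonneg_left (max_sub_zero_sq_le (by positivity) ha₁ (by positivity))
            (Real.sqrt_nonneg _)
      _ = 1 / √p * S := by field_simp
      _ ≤ sSup (restrictedDualSet ε v) :=
          mul_sum_abs_le_sSup_restrictedDualSet v (by positivity) hinv_le (by
            rw [Fintype.card_fin, div_pow, one_pow, Real.sq_sqrt (Nat.cast_nonneg p)]
            exact (mul_one_div_cancel (by positivity)).le)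
end

section
/- Let C ⊆ ℝ^p, λ > 0, and let L, L¹ : ℝ^p → ℝ with L(θ) = L¹(θ) + (1/n)h(u₁(θ)) where h : ℝ → [0,∞) satisfies h(t) ≤ t² for all t, u₁ : ℝ^p → [0,∞) is ‖x₁‖₂-Lipschitz (x₁ ∈ ℝ^p fixed), and L¹ is (λ)-strongly convex on the convex set C. Let θ̂ minimize L over C and θ̂¹ minimize L¹ over C. Then ‖θ̂ − θ̂¹‖₂ ≤ √(2/(λn)) · u₁(θ̂¹), and consequently 0 ≤ u₁(θ̂) ≤ (1 + √(2/(λn))·‖x₁‖₂) · u₁(θ̂¹). -/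
/-!
Strong convexity of `L¹` makes its minimizer `θ̂¹` a point of quadratic growth over `C`:
`L¹(θ) - L¹(θ̂¹) ≥ (λ/2)‖θ - θ̂¹‖²`. Adding the nonnegative penalty `(1/n)h(u₁)` can lower the
value at `θ̂¹` by at most `(1/n)u₁(θ̂¹)²`, so the minimizer `θ̂` of `L` stays within
`√(2/(λn))·u₁(θ̂¹)` of `θ̂¹`; the Lipschitz bound on `u₁` then transfers this to `u₁(θ̂)`.
-/

open Set Filter Topology

section StrongConvexity

variable {E : Type*} [NormedAddCommGroup E] [NormedSpace ℝ E] {s : Set E} {m : ℝ} {f : E → ℝ}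
  {x y : E}

theorem StrongConvexOn.mul_sq_norm_sub_le_of_isMinOn (hf : StrongConvexOn s m f)
    (hmin : IsMinOn f s x) (hx : x ∈ s) (hy : y ∈ s) :
    m / 2 * ‖y - x‖ ^ 2 ≤ f y - f x := by
  -- compare `f x` with `f` at the point `(1 - r) • y + r • x` of the segment, then let `r → 1`
  have hsegment : ∀ r ∈ Ioo (0 : ℝ) 1, r * (m / 2 * ‖y - x‖ ^ 2) ≤ f y - f x := by
    rintro r ⟨hr0, hr1⟩
    have hconv := hf.2 hy hx (sub_nonneg.2 hr1.le) hr0.le (sub_add_cancel 1 r)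
    have hle : f x ≤ f ((1 - r) • y + r • x) :=
      hmin (hf.1 hy hx (sub_nonneg.2 hr1.le) hr0.le (sub_add_cancel 1 r))
    simp only [smul_eq_mul] at hconv
    refine le_of_mul_le_mul_left ?_ (sub_pos.2 hr1)
    linarith
  have hlim : Tendsto (fun r : ℝ => r * (m / 2 * ‖y - x‖ ^ 2)) (𝓝[<] 1)
      (𝓝 (m / 2 * ‖y - x‖ ^ 2)) :=
    ((continuous_mul_const _).tendsto' 1 _ (one_mul _)).mono_left nhdsWithin_le_nhds
  exact le_of_tendsto hlim (mem_of_superset (Ioo_mem_nhdsLT one_pos) hsegment)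

theorem StrongConvexOn.mul_sq_norm_sub_le_of_isMinOn_add (hf : StrongConvexOn s m f)
    {P : E → ℝ} {z : E} (hmin : IsMinOn (fun θ => f θ + P θ) s z) (hmin₁ : IsMinOn f s x)
    (hz : z ∈ s) (hx : x ∈ s) (hPz : 0 ≤ P z) :
    m / 2 * ‖z - x‖ ^ 2 ≤ P x := by
  have hgrowth := hf.mul_sq_norm_sub_le_of_isMinOn hmin₁ hx hz
  have hopt : f z + P z ≤ f x + P x := hmin hx
  linarith

end StrongConvexity

theorem stmt_18_general (p n : ℕ)
    (C : Set (EuclideanSpace ℝ (Fin p))) (hC : Convex ℝ C)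
    (lam : ℝ) (hlam : 0 < lam)
    (h : ℝ → ℝ) (hh0 : ∀ t, 0 ≤ h t) (hht : ∀ t, h t ≤ t ^ 2)
    (x₁ : EuclideanSpace ℝ (Fin p))
    (u₁ : EuclideanSpace ℝ (Fin p) → ℝ) (hu₁0 : ∀ θ, 0 ≤ u₁ θ)
    (hu₁lip : ∀ a b, |u₁ a - u₁ b| ≤ ‖x₁‖ * ‖a - b‖)
    (L L1 : EuclideanSpace ℝ (Fin p) → ℝ)
    (hL : ∀ θ, L θ = L1 θ + (1 / (n : ℝ)) * h (u₁ θ))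
    (hsc : ∀ a ∈ C, ∀ b ∈ C, ∀ s t : ℝ, 0 ≤ s → 0 ≤ t → s + t = 1 →
      L1 (s • a + t • b) ≤ s * L1 a + t * L1 b - (lam / 2) * s * t * ‖a - b‖ ^ 2)
    (θhat θhat1 : EuclideanSpace ℝ (Fin p))
    (hθhat : θhat ∈ C ∧ ∀ θ ∈ C, L θhat ≤ L θ)
    (hθhat1 : θhat1 ∈ C ∧ ∀ θ ∈ C, L1 θhat1 ≤ L1 θ) :
    ‖θhat - θhat1‖ ≤ Real.sqrt (2 / (lam * n)) * u₁ θhat1 ∧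
    0 ≤ u₁ θhat ∧
    u₁ θhat ≤ (1 + Real.sqrt (2 / (lam * n)) * ‖x₁‖) * u₁ θhat1 := by
  obtain rfl : L = fun θ => L1 θ + 1 / (n : ℝ) * h (u₁ θ) := funext hL
  have hstrong : StrongConvexOn C lam L1 := ⟨hC, fun a ha b hb s t hs ht hst =>
    (hsc a ha b hb s t hs ht hst).trans_eq (by simp only [smul_eq_mul]; ring)⟩
  have hpenalty : lam / 2 * ‖θhat - θhat1‖ ^ 2 ≤ 1 / (n : ℝ) * u₁ θhat1 ^ 2 :=
    (hstrong.mul_sq_norm_sub_le_of_isMinOn_add (P := fun θ => 1 / (n : ℝ) * h (u₁ θ))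
      (isMinOn_iff.2 hθhat.2) (isMinOn_iff.2 hθhat1.2) hθhat.1 hθhat1.1
      (mul_nonneg (by positivity) (hh0 _))).trans (by gcongr; exact hht _)
  have hdist : ‖θhat - θhat1‖ ≤ Real.sqrt (2 / (lam * n)) * u₁ θhat1 := by
    rw [← Real.sqrt_sq (hu₁0 θhat1), ← Real.sqrt_mul (by positivity)]
    refine Real.le_sqrt_of_sq_le ?_
    calc ‖θhat - θhat1‖ ^ 2 = 2 / lam * (lam / 2 * ‖θhat - θhat1‖ ^ 2) := by field_simp
      _ ≤ 2 / lam * (1 / (n : ℝ) * u₁ θhat1 ^ 2) := by gcongr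
      _ = 2 / (lam * n) * u₁ θhat1 ^ 2 := by ring
  refine ⟨hdist, hu₁0 θhat, ?_⟩
  calc u₁ θhat ≤ u₁ θhat1 + ‖x₁‖ * ‖θhat - θhat1‖ := by
        linarith [(le_abs_self _).trans (hu₁lip θhat θhat1)]
    _ ≤ u₁ θhat1 + ‖x₁‖ * (Real.sqrt (2 / (lam * n)) * u₁ θhat1) := by gcongr
    _ = (1 + Real.sqrt (2 / (lam * n)) * ‖x₁‖) * u₁ θhat1 := by ring

/-- Leave-one-out decoupling: if `L(θ) = L¹(θ) + (1/n)h(u₁(θ))` with `0 ≤ h(t) ≤ t²`,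
`u₁ ≥ 0` being `‖x₁‖`-Lipschitz, and `L¹` is `λ`-strongly convex on the convex set `C`,
then the minimizers `θ̂` of `L` and `θ̂¹` of `L¹` over `C` satisfy
`‖θ̂ − θ̂¹‖ ≤ √(2/(λn))·u₁(θ̂¹)` and `0 ≤ u₁(θ̂) ≤ (1 + √(2/(λn))‖x₁‖)·u₁(θ̂¹)`. -/
theorem stmt_18 (p n : ℕ) (hn : 0 < n)
    (C : Set (EuclideanSpace ℝ (Fin p))) (hC : Convex ℝ C)
    (lam : ℝ) (hlam : 0 < lam)
    (h : ℝ → ℝ) (hh0 : ∀ t, 0 ≤ h t) (hht : ∀ t, h t ≤ t ^ 2)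
    (x₁ : EuclideanSpace ℝ (Fin p))
    (u₁ : EuclideanSpace ℝ (Fin p) → ℝ) (hu₁0 : ∀ θ, 0 ≤ u₁ θ)
    (hu₁lip : ∀ a b, |u₁ a - u₁ b| ≤ ‖x₁‖ * ‖a - b‖)
    (L L1 : EuclideanSpace ℝ (Fin p) → ℝ)
    (hL : ∀ θ, L θ = L1 θ + (1 / (n : ℝ)) * h (u₁ θ))
    (hsc : ∀ a ∈ C, ∀ b ∈ C, ∀ s t : ℝ, 0 ≤ s → 0 ≤ t → s + t = 1 →
      L1 (s • a + t • b) ≤ s * L1 a + t * L1 b - (lam / 2) * s * t * ‖a - b‖ ^ 2)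
    (θhat θhat1 : EuclideanSpace ℝ (Fin p))
    (hθhat : θhat ∈ C ∧ ∀ θ ∈ C, L θhat ≤ L θ)
    (hθhat1 : θhat1 ∈ C ∧ ∀ θ ∈ C, L1 θhat1 ≤ L1 θ) :
    ‖θhat - θhat1‖ ≤ Real.sqrt (2 / (lam * n)) * u₁ θhat1 ∧
    0 ≤ u₁ θhat ∧
    u₁ θhat ≤ (1 + Real.sqrt (2 / (lam * n)) * ‖x₁‖) * u₁ θhat1 :=
  stmt_18_general p n C hC lam hlam h hh0 hht x₁ u₁ hu₁0 hu₁lip L L1 hL hsc θhat θhat1 hθhat hθhat1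
end
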